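/- Let μ_n be a sequence of signed Radon measures on a compact set K ⊂ ℝ² converging weakly-* to μ, with sup_n |μ_n|(K) < ∞, and let b : K → ℝ be continuous with b ≥ b₀ > 0. If ∫ b d|μ_n| → ∫ b dμ and ∫ b dμ_n → ∫ b dμ, then |μ_n| converges weakly-* to μ; in particular μ ≥ 0. -/

import Mathlib

/-!
Subtracting the two limits for `b` gives `∫ b dN_n → 0`; as `b ≥ b₀ > 0` on `K`, the masses
`N_n(ℝ²)` tend to `0`, so `|μ_n| = μ_n + 2 N_n` has the same weak-* limit `Pl - Nl` as `μ_n`.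
That limit is then a nonnegative functional on compactly supported continuous functions, which
for Radon measures means `Nl ≤ Pl`; together with `Nl ⟂ Pl` this forces `Nl = 0`.
-/

open MeasureTheory Filter Set Topology

namespace MeasureTheory

variable {X : Type*} [MeasurableSpace X]

theorem _root_.ContinuousOn.integrable_of_measure_compl_eq_zero [TopologicalSpace X]
    [OpensMeasurableSpace X] [T2Space X]
    {K : Set X} (hK : IsCompact K) {b : X → ℝ} (hb : ContinuousOn b K) {μ : Measure X}
    [IsFiniteMeasureOnCompacts μ] (hμ : μ Kᶜ = 0) : Integrable b μ := by
  rw [← Measure.restrict_eq_self_of_ae_mem (mem_ae_iff.mpr hμ)]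
  exact hb.integrableOn_compact hK

theorem mul_measureReal_univ_le_integral {μ : Measure X} [IsFiniteMeasure μ] {b : X → ℝ}
    (hb : Integrable b μ) {b₀ : ℝ} (hb_ge : ∀ᵐ x ∂μ, b₀ ≤ b x) :
    b₀ * μ.real univ ≤ ∫ x, b x ∂μ := by
  calc b₀ * μ.real univ = ∫ _, b₀ ∂μ := by rw [integral_const, smul_eq_mul, mul_comm]
    _ ≤ ∫ x, b x ∂μ := integral_mono_ae (integrable_const b₀) hb hb_ge

theorem tendsto_measureReal_univ_of_tendsto_integral {ι : Type*} {l : Filter ι}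
    {μ : ι → Measure X} [∀ i, IsFiniteMeasure (μ i)] {b : X → ℝ} (hb : ∀ i, Integrable b (μ i))
    {b₀ : ℝ} (hb₀ : 0 < b₀) (hb_ge : ∀ i, ∀ᵐ x ∂μ i, b₀ ≤ b x)
    (h : Tendsto (fun i => ∫ x, b x ∂μ i) l (𝓝 0)) :
    Tendsto (fun i => (μ i).real univ) l (𝓝 0) := by
  refine squeeze_zero (fun i => measureReal_nonneg) (fun i => ?_) (by simpa using h.div_const b₀)
  rw [le_div_iff₀ hb₀, mul_comm]
  exact mul_measureReal_univ_le_integral (hb i) (hb_ge i)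

theorem tendsto_integral_of_tendsto_measureReal_univ {ι : Type*} {l : Filter ι}
    {μ : ι → Measure X} [∀ i, IsFiniteMeasure (μ i)] {f : X → ℝ} {C : ℝ} (hf : ∀ x, ‖f x‖ ≤ C)
    (h : Tendsto (fun i => (μ i).real univ) l (𝓝 0)) :
    Tendsto (fun i => ∫ x, f x ∂μ i) l (𝓝 0) :=
  squeeze_zero_norm (fun _ => norm_integral_le_of_norm_le_const (Eventually.of_forall hf))
    (by simpa using h.const_mul C)

theorem integral_add_measure_eq_sub_add_two_mul {μ ν : Measure X} {f : X → ℝ}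
    (hμ : Integrable f μ) (hν : Integrable f ν) :
    ∫ x, f x ∂(μ + ν) = (∫ x, f x ∂μ - ∫ x, f x ∂ν) + 2 * ∫ x, f x ∂ν := by
  rw [integral_add_measure hμ hν]; ring

section Regular

variable [TopologicalSpace X] [BorelSpace X] [LocallyCompactSpace X] [RegularSpace X]
  {μ ν : Measure X}

theorem _root_.IsCompact.measure_le_of_forall_integral_le {k : Set X} (hk : IsCompact k)
    [IsFiniteMeasureOnCompacts μ] [μ.InnerRegularCompactLTTop] [IsFiniteMeasureOnCompacts ν]
    (h : ∀ f : X → ℝ, Continuous f → HasCompactSupport f → 0 ≤ f → ∫ x, f x ∂ν ≤ ∫ x, f x ∂μ) :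
    ν k ≤ μ k := by
  rw [hk.measure_eq_biInf_integral_hasCompactSupport μ]
  simp only [le_iInf_iff]
  intro f hf hfs hfk hf0
  calc ν k ≤ ENNReal.ofReal (∫ x, f x ∂ν) :=
        (hf.integrable_of_hasCompactSupport hfs).measure_le_integral (.of_forall hf0)
          fun x hx => (hfk hx).ge
    _ ≤ ENNReal.ofReal (∫ x, f x ∂μ) := ENNReal.ofReal_le_ofReal (h f hf hfs hf0)

theorem Measure.le_of_forall_integral_le [IsFiniteMeasureOnCompacts μ] [μ.InnerRegularCompactLTTop]
    [IsFiniteMeasure ν] [ν.InnerRegularCompactLTTop]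
    (h : ∀ f : X → ℝ, Continuous f → HasCompactSupport f → 0 ≤ f → ∫ x, f x ∂ν ≤ ∫ x, f x ∂μ) :
    ν ≤ μ := by
  refine Measure.le_iff.mpr fun s hs => le_of_forall_lt fun r hr => ?_
  obtain ⟨k, hks, hk, hrk⟩ := hs.exists_lt_isCompact_of_ne_top (measure_ne_top ν s) hr
  exact hrk.trans_le ((hk.measure_le_of_forall_integral_le h).trans (measure_mono hks))

end Regular

end MeasureTheory

theorem stmt4_general (K : Set (ℝ × ℝ)) (hK : IsCompact K) (b₀ : ℝ) (hb₀ : 0 < b₀)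
    (b : (ℝ × ℝ) → ℝ) (hbc : Continuous b) (hb : ∀ x ∈ K, b₀ ≤ b x)
    (P N : ℕ → Measure (ℝ × ℝ)) (Pl Nl : Measure (ℝ × ℝ))
    (hPf : ∀ n, IsFiniteMeasure (P n)) (hNf : ∀ n, IsFiniteMeasure (N n))
    (hPlf : IsFiniteMeasure Pl) (hNlf : IsFiniteMeasure Nl)
    (hsingl : Measure.MutuallySingular Pl Nl)
    (hsupp : ∀ n, P n Kᶜ = 0 ∧ N n Kᶜ = 0)
    (hweak : ∀ f : (ℝ × ℝ) → ℝ, Continuous f → HasCompactSupport f →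
      Tendsto (fun n => (∫ x, f x ∂(P n)) - ∫ x, f x ∂(N n)) atTop
        (nhds ((∫ x, f x ∂Pl) - ∫ x, f x ∂Nl)))
    (hbabs : Tendsto (fun n => ∫ x, b x ∂(P n + N n)) atTop
        (nhds ((∫ x, b x ∂Pl) - ∫ x, b x ∂Nl)))
    (hbsigned : Tendsto (fun n => (∫ x, b x ∂(P n)) - ∫ x, b x ∂(N n)) atTop
        (nhds ((∫ x, b x ∂Pl) - ∫ x, b x ∂Nl))) :
    (∀ f : (ℝ × ℝ) → ℝ, Continuous f → HasCompactSupport f →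
      Tendsto (fun n => ∫ x, f x ∂(P n + N n)) atTop
        (nhds ((∫ x, f x ∂Pl) - ∫ x, f x ∂Nl))) ∧ Nl = 0 := by
  have hbP n : Integrable b (P n) :=
    hbc.continuousOn.integrable_of_measure_compl_eq_zero hK (hsupp n).1
  have hbN n : Integrable b (N n) :=
    hbc.continuousOn.integrable_of_measure_compl_eq_zero hK (hsupp n).2
  have hNb : Tendsto (fun n => ∫ x, b x ∂N n) atTop (𝓝 0) := by
    have h := (hbabs.sub hbsigned).div_const 2
    rw [sub_self, zero_div] at h
    refine h.congr fun n => ?_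
    rw [integral_add_measure_eq_sub_add_two_mul (hbP n) (hbN n)]; ring
  have hNmass : Tendsto (fun n => (N n).real univ) atTop (𝓝 0) :=
    tendsto_measureReal_univ_of_tendsto_integral hbN hb₀
      (fun n => mem_of_superset (mem_ae_iff.mpr (hsupp n).2) hb) hNb
  have habs : ∀ f : (ℝ × ℝ) → ℝ, Continuous f → HasCompactSupport f →
      Tendsto (fun n => ∫ x, f x ∂(P n + N n)) atTop (𝓝 (∫ x, f x ∂Pl - ∫ x, f x ∂Nl)) := by
    intro f hf hfs
    obtain ⟨C, hC⟩ := hf.bounded_above_of_compact_support hfs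
    have hfN := (tendsto_integral_of_tendsto_measureReal_univ hC hNmass).const_mul (2 : ℝ)
    have h := (hweak f hf hfs).add hfN
    rw [mul_zero, add_zero] at h
    refine h.congr fun n => ?_
    rw [integral_add_measure_eq_sub_add_two_mul (hf.integrable_of_hasCompactSupport hfs)
      (hf.integrable_of_hasCompactSupport hfs)]
  refine ⟨habs, Measure.eq_zero_of_absolutelyContinuous_of_mutuallySingular
    (Measure.absolutelyContinuous_of_le (Measure.le_of_forall_integral_le ?_)) hsingl.symm⟩
  intro f hf hfs hf0
  exact sub_nonneg.mp <| ge_of_tendsto' (habs f hf hfs) fun n => integral_nonneg hf0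

/-- if signed measures `μ_n = P_n - N_n` (Jordan decompositions) on a
compact set `K` converge weakly-* to `μ = P - N` with bounded total variations, `b`
is continuous with `b ≥ b₀ > 0`, and both `∫ b d|μ_n| → ∫ b dμ` and
`∫ b dμ_n → ∫ b dμ`, then `|μ_n| ⇀ μ` weakly-*; in particular `μ ≥ 0`
(i.e. the negative part `N` of `μ` vanishes). -/
theorem stmt4 (K : Set (ℝ × ℝ)) (hK : IsCompact K) (b₀ : ℝ) (hb₀ : 0 < b₀)
    (b : (ℝ × ℝ) → ℝ) (hbc : Continuous b) (hb : ∀ x ∈ K, b₀ ≤ b x)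
    (P N : ℕ → Measure (ℝ × ℝ)) (Pl Nl : Measure (ℝ × ℝ))
    (hPf : ∀ n, IsFiniteMeasure (P n)) (hNf : ∀ n, IsFiniteMeasure (N n))
    (hPlf : IsFiniteMeasure Pl) (hNlf : IsFiniteMeasure Nl)
    (hsing : ∀ n, Measure.MutuallySingular (P n) (N n))
    (hsingl : Measure.MutuallySingular Pl Nl)
    (hsupp : ∀ n, P n Kᶜ = 0 ∧ N n Kᶜ = 0) (hsuppl : Pl Kᶜ = 0 ∧ Nl Kᶜ = 0)
    (hTV : ∃ Cb : ℝ, ∀ n, (P n Set.univ).toReal + (N n Set.univ).toReal ≤ Cb)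
    (hweak : ∀ f : (ℝ × ℝ) → ℝ, Continuous f → HasCompactSupport f →
      Tendsto (fun n => (∫ x, f x ∂(P n)) - ∫ x, f x ∂(N n)) atTop
        (nhds ((∫ x, f x ∂Pl) - ∫ x, f x ∂Nl)))
    (hbabs : Tendsto (fun n => ∫ x, b x ∂(P n + N n)) atTop
        (nhds ((∫ x, b x ∂Pl) - ∫ x, b x ∂Nl)))
    (hbsigned : Tendsto (fun n => (∫ x, b x ∂(P n)) - ∫ x, b x ∂(N n)) atTop
        (nhds ((∫ x, b x ∂Pl) - ∫ x, b x ∂Nl))) :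
    (∀ f : (ℝ × ℝ) → ℝ, Continuous f → HasCompactSupport f →
      Tendsto (fun n => ∫ x, f x ∂(P n + N n)) atTop
        (nhds ((∫ x, f x ∂Pl) - ∫ x, f x ∂Nl))) ∧ Nl = 0 :=
  stmt4_general K hK b₀ hb₀ b hbc hb P N Pl Nl hPf hNf hPlf hNlf hsingl hsupp hweak hbabs hbsigned
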